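/- There is no function β : ℝ₊ × ℝ₊ → ℝ₊ with lim_{t→∞} β(1, t) = 0 such that for all n ≥ 2 and all t ≥ 0 one has ‖x_n(t)‖_{L²(0,1)} ≤ β(‖x_n(0)‖_{L²(0,1)}, t), where x_n(t)(ξ) = φ_{f_n(ξ)}(t). In particular, the system ẋ(t,ξ) = −sat_ℝ(x(t,ξ)) on L²(0,1) is not uniformly globally asymptotically stable: no bound ‖x(t)‖_{L²} ≤ β(‖x(0)‖_{L²}, t) with β of class KL can hold for all its solutions. -/

import Mathlib

open MeasureTheory

/-- The scalar saturation function `sat_ℝ(z) = max (-1) (min 1 z)`. -/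
noncomputable def satR (z : ℝ) : ℝ := max (-1) (min 1 z)

/-- The explicit solution `φ_a` of the scalar ODE `ẏ = −sat_ℝ(y)`, `y(0) = a`. -/
noncomputable def phi (a t : ℝ) : ℝ :=
  if 1 + t ≤ a then a - t
  else if -1 < a ∧ a < 1 then Real.exp (-t) * a
  else if a ≤ -1 - t then a + t
  else if 1 ≤ a then Real.exp (a - 1 - t)
  else -Real.exp (1 - t - a)

/-- `α_n = (1/2)(1 − 1/n)`. -/
noncomputable def alphaN (n : ℕ) : ℝ := (1 / 2) * (1 - 1 / (n : ℝ))

/-- `f_n(ξ) = n^{−1/2} ξ^{−α_n}`. -/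
noncomputable def fn (n : ℕ) (ξ : ℝ) : ℝ := (n : ℝ) ^ (-(1 : ℝ) / 2) * ξ ^ (-alphaN n)

set_option maxHeartbeats 1000000

lemma phi_nonneg {a t : ℝ} (ha : 0 ≤ a) (ht : 0 ≤ t) : 0 ≤ phi a t := by
  unfold phi
  split_ifs with h1 h2 h3 h4
  · linarith
  · positivity
  · linarith
  · positivity
  · exfalso; push_neg at h2; rcases lt_or_ge a 1 with h | h
    · have := h2 (by linarith); linarith
    · exact h4 h

lemma phi_le {a t : ℝ} (ha : 0 ≤ a) (ht : 0 ≤ t) : phi a t ≤ a := by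
  unfold phi
  split_ifs with h1 h2 h3 h4
  · linarith
  · calc Real.exp (-t) * a ≤ 1 * a := by
          apply mul_le_mul_of_nonneg_right _ ha
          exact Real.exp_le_one_iff.mpr (by linarith)
      _ = a := one_mul a
  · linarith
  · push_neg at h1
    calc Real.exp (a - 1 - t) ≤ 1 := Real.exp_le_one_iff.mpr (by linarith)
      _ ≤ a := h4
  · have : (0:ℝ) < Real.exp (1 - t - a) := Real.exp_pos _
    linarith

lemma phi_big {a t : ℝ} (ht : 0 ≤ t) (ha : 2 * t + 2 ≤ a) : a ^ 2 / 4 ≤ (phi a t) ^ 2 := by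
  have h1 : 1 + t ≤ a := by linarith
  unfold phi
  rw [if_pos h1]
  have h2 : a / 2 ≤ a - t := by linarith
  have h3 : 0 ≤ a / 2 := by linarith
  nlinarith

lemma measurable_phi (t : ℝ) : Measurable fun a : ℝ => phi a t := by
  unfold phi
  apply Measurable.ite (measurableSet_le measurable_const measurable_id)
    (measurable_id.sub measurable_const)
  apply Measurable.ite
  · have : {a : ℝ | -1 < a ∧ a < 1} = Set.Ioo (-1) 1 := rfl
    rw [this]; exact measurableSet_Ioo
  · exact measurable_const.mul measurable_id
  apply Measurable.ite (measurableSet_le measurable_id measurable_const)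
    (measurable_id.add measurable_const)
  apply Measurable.ite (measurableSet_le measurable_const measurable_id)
  · exact (measurable_id.sub measurable_const).sub measurable_const |>.exp
  · exact ((measurable_const.sub measurable_id)).exp.neg

lemma measurable_fn (n : ℕ) : Measurable (fn n) := by
  unfold fn
  fun_prop

lemma fn_nonneg (n : ℕ) {ξ : ℝ} (hξ : 0 ≤ ξ) : 0 ≤ fn n ξ :=
  mul_nonneg (Real.rpow_nonneg (Nat.cast_nonneg n) _) (Real.rpow_nonneg hξ _)

lemma fn_sq_eq {n : ℕ} (hn : 2 ≤ n) {ξ : ℝ} (hξ : 0 ≤ ξ) :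
    fn n ξ ^ 2 = ((n:ℝ))⁻¹ * ξ ^ (-1 + (n:ℝ)⁻¹) := by
  have hn0 : (0:ℝ) < n := by exact Nat.cast_pos.mpr (by omega)
  have hinv : (n:ℝ)⁻¹ ≤ 1/2 := by
    rw [inv_le_iff_one_le_mul₀ hn0]
    have : (2:ℝ) ≤ n := by exact_mod_cast hn
    linarith
  have hexp : (-1 + (n:ℝ)⁻¹) ≠ 0 := by
    intro h; have : (n:ℝ)⁻¹ = 1 := by linarith
    linarith
  have halpha : -alphaN n * 2 = -1 + (n:ℝ)⁻¹ := by
    unfold alphaN; field_simp; ring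
  rcases eq_or_lt_of_le hξ with h0 | h0
  · unfold fn
    rw [← h0, Real.zero_rpow (by
      intro h
      have : -alphaN n * 2 = 0 := by rw [h]; ring
      rw [halpha] at this; exact hexp this),
      Real.zero_rpow hexp]
    ring
  · unfold fn
    rw [mul_pow]
    have e1 : ((n:ℝ) ^ (-(1:ℝ)/2)) ^ 2 = (n:ℝ)⁻¹ := by
      rw [← Real.rpow_natCast ((n:ℝ) ^ (-(1:ℝ)/2)) 2, ← Real.rpow_mul hn0.le]
      norm_num [Real.rpow_neg_one]
    have e2 : (ξ ^ (-alphaN n)) ^ 2 = ξ ^ (-1 + (n:ℝ)⁻¹) := by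
      rw [← Real.rpow_natCast (ξ ^ (-alphaN n)) 2, ← Real.rpow_mul h0.le]
      norm_num [halpha]
    rw [e1, e2]

lemma integral_fn_sq {n : ℕ} (hn : 2 ≤ n) {δ : ℝ} (h0 : 0 < δ) :
    ∫ ξ in Set.Ioo (0:ℝ) δ, fn n ξ ^ 2 = δ ^ ((n:ℝ)⁻¹) := by
  have hn0 : (0:ℝ) < n := by exact Nat.cast_pos.mpr (by omega)
  have hr : (-1:ℝ) < -1 + (n:ℝ)⁻¹ := by
    have : (0:ℝ) < (n:ℝ)⁻¹ := by positivity
    linarith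
  have hr1 : -1 + (n:ℝ)⁻¹ + 1 = (n:ℝ)⁻¹ := by ring
  rw [← MeasureTheory.integral_Ioc_eq_integral_Ioo, ← intervalIntegral.integral_of_le h0.le]
  rw [intervalIntegral.integral_congr (g := fun ξ => (n:ℝ)⁻¹ * ξ ^ (-1 + (n:ℝ)⁻¹))
    (fun ξ hξ => fn_sq_eq hn (by rw [Set.uIcc_of_le h0.le] at hξ; exact hξ.1))]
  have hne : ((n:ℝ)⁻¹) ≠ 0 := by positivity
  rw [intervalIntegral.integral_const_mul]
  rw [integral_rpow (Or.inl hr)]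
  rw [hr1]
  rw [Real.zero_rpow hne]
  field_simp
  simp

lemma integrableOn_fn_sq {n : ℕ} (hn : 2 ≤ n) :
    IntegrableOn (fun ξ => fn n ξ ^ 2) (Set.Ioo (0:ℝ) 1) := by
  have hr : (-1:ℝ) < -1 + (n:ℝ)⁻¹ := by
    have hn0 : (0:ℝ) < n := by exact Nat.cast_pos.mpr (by omega)
    have : (0:ℝ) < (n:ℝ)⁻¹ := by positivity
    linarith
  have h := intervalIntegral.intervalIntegrable_rpow' (a := (0:ℝ)) (b := 1) hr
  have h2 : IntegrableOn (fun x : ℝ => x ^ (-1 + (n:ℝ)⁻¹)) (Set.Ioc 0 1) :=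
    (intervalIntegrable_iff_integrableOn_Ioc_of_le (by norm_num)).mp h
  have h3 : IntegrableOn (fun x : ℝ => (n:ℝ)⁻¹ * x ^ (-1 + (n:ℝ)⁻¹)) (Set.Ioo 0 1) :=
    (h2.mono_set Set.Ioo_subset_Ioc_self).const_mul ((n:ℝ)⁻¹)
  exact IntegrableOn.congr_fun h3 (fun ξ hξ => (fn_sq_eq hn hξ.1.le).symm) measurableSet_Ioo

lemma integrableOn_phi_sq {n : ℕ} (hn : 2 ≤ n) {t : ℝ} (ht : 0 ≤ t) :
    IntegrableOn (fun ξ => phi (fn n ξ) t ^ 2) (Set.Ioo (0:ℝ) 1) := by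
  apply Integrable.mono (integrableOn_fn_sq hn)
  · exact ((((measurable_phi t).comp (measurable_fn n)).pow_const 2).aestronglyMeasurable).restrict
  · rw [ae_restrict_iff' measurableSet_Ioo]
    refine Filter.Eventually.of_forall fun ξ hξ => ?_
    have hfn : 0 ≤ fn n ξ := fn_nonneg n hξ.1.le
    have h1 : 0 ≤ phi (fn n ξ) t := phi_nonneg hfn ht
    have h2 : phi (fn n ξ) t ≤ fn n ξ := phi_le hfn ht
    rw [Real.norm_of_nonneg (by positivity), Real.norm_of_nonneg (by positivity)]
    exact pow_le_pow_left₀ h1 h2 2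

lemma integral_fn_sq_one {n : ℕ} (hn : 2 ≤ n) :
    ∫ ξ in Set.Ioo (0:ℝ) 1, fn n ξ ^ 2 = 1 := by
  rw [integral_fn_sq hn one_pos, Real.one_rpow]

lemma lower_bound {t : ℝ} (ht : 0 ≤ t) :
    ∃ n : ℕ, 2 ≤ n ∧
      (1/3 : ℝ) ≤ Real.sqrt (∫ ξ in Set.Ioo (0:ℝ) 1, (phi (fn n ξ) t) ^ 2) := by
  set s : ℝ := 2 * t + 2 with hs
  have hs2 : 2 ≤ s := by simp [hs]; linarith
  obtain ⟨m, hm⟩ := pow_unbounded_of_one_lt (s ^ 2) (y := (2:ℝ)) one_lt_two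
  refine ⟨2*m+2, by omega, ?_⟩
  set n : ℕ := 2*m+2 with hndef
  have hn2 : 2 ≤ n := by omega
  have hn0 : (0:ℝ) < n := Nat.cast_pos.mpr (by omega)
  have h2n : (2:ℝ) ≤ n := by exact_mod_cast hn2
  set A : ℝ := (n:ℝ) ^ ((1:ℝ)/2) * s with hA
  have hnh : (1:ℝ) ≤ (n:ℝ) ^ ((1:ℝ)/2) := by
    calc (1:ℝ) = (1:ℝ) ^ ((1:ℝ)/2) := (Real.one_rpow _).symm
      _ ≤ (n:ℝ) ^ ((1:ℝ)/2) := Real.rpow_le_rpow zero_le_one (by linarith) (by norm_num)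
  have hA1 : 1 ≤ A := by
    calc (1:ℝ) ≤ s := by linarith
      _ = 1 * s := (one_mul s).symm
      _ ≤ A := by rw [hA]; exact mul_le_mul_of_nonneg_right hnh (by linarith)
  have hA0 : 0 < A := by linarith
  have hinv : 1/(n:ℝ) ≤ 1/2 := one_div_le_one_div_of_le two_pos h2n
  have hα : 0 < alphaN n := by unfold alphaN; linarith
  set δ : ℝ := A ^ (-(alphaN n)⁻¹) with hδ
  have hδ0 : 0 < δ := Real.rpow_pos_of_pos hA0 _
  have hδ1 : δ ≤ 1 :=
    Real.rpow_le_one_of_one_le_of_nonpos hA1 (neg_nonpos.mpr (by positivity))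
  have hδA : δ ^ (-alphaN n) = A := by
    rw [hδ, ← Real.rpow_mul hA0.le]
    rw [show -(alphaN n)⁻¹ * -alphaN n = 1 by field_simp]
    exact Real.rpow_one A
  have hfs : ∀ ξ ∈ Set.Ioo (0:ℝ) δ, s ≤ fn n ξ := by
    intro ξ hξ
    have h1 : δ ^ (-alphaN n) ≤ ξ ^ (-alphaN n) :=
      Real.rpow_le_rpow_of_nonpos hξ.1 hξ.2.le (neg_nonpos.mpr hα.le)
    rw [hδA] at h1
    have h2 : (n:ℝ) ^ (-(1:ℝ)/2) * A ≤ fn n ξ := by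
      unfold fn
      exact mul_le_mul_of_nonneg_left h1 (Real.rpow_nonneg hn0.le _)
    have h3 : (n:ℝ) ^ (-(1:ℝ)/2) * A = s := by
      rw [hA, ← mul_assoc, ← Real.rpow_add hn0]
      norm_num
    linarith
  -- comparison of integrals
  have hind : IntegrableOn ((Set.Ioo (0:ℝ) δ).indicator fun ξ => fn n ξ ^ 2 / 4)
      (Set.Ioo (0:ℝ) 1) := by
    exact ((integrableOn_fn_sq hn2).div_const 4).indicator measurableSet_Ioo
  have hcomp : ∫ ξ in Set.Ioo (0:ℝ) 1,
        (Set.Ioo (0:ℝ) δ).indicator (fun ξ => fn n ξ ^ 2 / 4) ξ ≤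
      ∫ ξ in Set.Ioo (0:ℝ) 1, phi (fn n ξ) t ^ 2 := by
    refine setIntegral_mono_on hind (integrableOn_phi_sq hn2 ht) measurableSet_Ioo ?_
    intro ξ hξ
    by_cases hmem : ξ ∈ Set.Ioo (0:ℝ) δ
    · rw [Set.indicator_of_mem hmem]
      exact phi_big ht (by rw [← hs]; exact hfs ξ hmem)
    · rw [Set.indicator_of_notMem hmem]
      positivity
  have hval : ∫ ξ in Set.Ioo (0:ℝ) 1,
      (Set.Ioo (0:ℝ) δ).indicator (fun ξ => fn n ξ ^ 2 / 4) ξ = δ ^ ((n:ℝ)⁻¹) / 4 := by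
    rw [setIntegral_indicator measurableSet_Ioo,
      Set.inter_eq_self_of_subset_right (Set.Ioo_subset_Ioo le_rfl hδ1),
      integral_div, integral_fn_sq hn2 hδ0]
  -- lower bound for δ ^ (1/n)
  have hn1 : (1:ℝ) ≤ (n:ℝ) - 1 := by linarith
  have hexp : -(alphaN n)⁻¹ * (n:ℝ)⁻¹ = -(2 * ((n:ℝ) - 1)⁻¹) := by
    unfold alphaN
    rw [neg_mul, neg_inj]
    field_simp
  have hA2 : A ^ (2:ℝ) ≤ (2:ℝ) ^ ((n:ℝ) - 1) := by
    have e1 : A ^ (2:ℝ) = (n:ℝ) * s ^ 2 := by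
      rw [Real.rpow_two, hA, mul_pow, ← Real.rpow_natCast ((n:ℝ) ^ ((1:ℝ)/2)) 2,
        ← Real.rpow_mul hn0.le]
      norm_num
    have e2 : ((n:ℝ) - 1) = ((2*m+1 : ℕ) : ℝ) := by rw [hndef]; push_cast; ring
    have e3 : (2:ℝ) ^ ((n:ℝ) - 1) = (2:ℝ) ^ (2*m+1 : ℕ) := by
      rw [e2, Real.rpow_natCast]
    rw [e1, e3]
    have h4 : ((2*m+2 : ℕ) : ℝ) ≤ (2:ℝ) ^ (m+1 : ℕ) := by
      have := Nat.lt_two_pow_self (n := m)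
      have h5 : (2*m+2 : ℕ) ≤ 2 ^ (m+1) := by
        have : m + 1 ≤ 2 ^ m := this
        calc 2*m+2 = 2*(m+1) := by ring
          _ ≤ 2 * 2 ^ m := by omega
          _ = 2 ^ (m+1) := by rw [pow_succ]; ring
      exact_mod_cast h5
    have h6 : (n:ℝ) = ((2*m+2 : ℕ) : ℝ) := by rw [hndef]
    calc (n:ℝ) * s ^ 2 ≤ (n:ℝ) * (2:ℝ) ^ m := by
          apply mul_le_mul_of_nonneg_left hm.le hn0.le
      _ ≤ (2:ℝ) ^ (m+1 : ℕ) * (2:ℝ) ^ m := by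
          apply mul_le_mul_of_nonneg_right _ (by positivity)
          rw [h6]; exact h4
      _ = (2:ℝ) ^ (2*m+1 : ℕ) := by rw [← pow_add]; ring_nf
  have hδn : (1/2 : ℝ) ≤ δ ^ ((n:ℝ)⁻¹) := by
    have hn1' : ((n:ℝ) - 1) ≠ 0 := by linarith
    have hd1 : δ ^ ((n:ℝ)⁻¹) = A ^ (-(2 * ((n:ℝ) - 1)⁻¹)) := by
      rw [hδ, ← Real.rpow_mul hA0.le, hexp]
    have hd2 : A ^ (2 * ((n:ℝ) - 1)⁻¹) ≤ 2 := by
      calc A ^ (2 * ((n:ℝ) - 1)⁻¹) = (A ^ (2:ℝ)) ^ (((n:ℝ) - 1)⁻¹) := by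
            rw [← Real.rpow_mul hA0.le]
        _ ≤ ((2:ℝ) ^ ((n:ℝ) - 1)) ^ (((n:ℝ) - 1)⁻¹) := by
            apply Real.rpow_le_rpow (Real.rpow_nonneg hA0.le _) hA2 (by positivity)
        _ = 2 := by
            rw [← Real.rpow_mul (by norm_num), mul_inv_cancel₀ hn1', Real.rpow_one]
    have hd3 : 0 < A ^ (2 * ((n:ℝ) - 1)⁻¹) := Real.rpow_pos_of_pos hA0 _
    rw [hd1, Real.rpow_neg hA0.le]
    rw [show (1/2 : ℝ) = 2⁻¹ by norm_num]
    exact inv_anti₀ hd3 hd2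
  -- combine
  have hfinal : (1/8 : ℝ) ≤ ∫ ξ in Set.Ioo (0:ℝ) 1, phi (fn n ξ) t ^ 2 := by
    calc (1/8 : ℝ) = (1/2) / 4 := by norm_num
      _ ≤ δ ^ ((n:ℝ)⁻¹) / 4 := by linarith
      _ = ∫ ξ in Set.Ioo (0:ℝ) 1,
            (Set.Ioo (0:ℝ) δ).indicator (fun ξ => fn n ξ ^ 2 / 4) ξ := hval.symm
      _ ≤ _ := hcomp
  calc (1/3 : ℝ) ≤ Real.sqrt (1/8) := by
        nlinarith [Real.sqrt_nonneg (1/8 : ℝ), Real.sq_sqrt (show (0:ℝ) ≤ 1/8 by norm_num)]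
    _ ≤ Real.sqrt (∫ ξ in Set.Ioo (0:ℝ) 1, phi (fn n ξ) t ^ 2) :=
        Real.sqrt_le_sqrt hfinal

/-- There is no nonnegative `β` with `β(1,t) → 0` as `t → ∞` such that
`‖x_n(t)‖_{L²} ≤ β(‖x_n(0)‖_{L²}, t)` for all `n ≥ 2`, `t ≥ 0`, where
`x_n(t)(ξ) = φ_{f_n(ξ)}(t)`; in particular `ẋ = −sat_ℝ(x)` on `L²(0,1)` is not UGAS. -/
theorem stmt_15 :
    ¬ ∃ β : ℝ → ℝ → ℝ,
      (∀ r t : ℝ, 0 ≤ r → 0 ≤ t → 0 ≤ β r t) ∧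
      Filter.Tendsto (fun t => β 1 t) Filter.atTop (nhds 0) ∧
      (∀ n : ℕ, 2 ≤ n → ∀ t : ℝ, 0 ≤ t →
        Real.sqrt (∫ ξ in Set.Ioo (0:ℝ) 1, (phi (fn n ξ) t) ^ 2) ≤
          β (Real.sqrt (∫ ξ in Set.Ioo (0:ℝ) 1, (fn n ξ) ^ 2)) t) := by
  rintro ⟨β, hβpos, hβ0, hβ⟩
  have hall : ∀ t : ℝ, 0 ≤ t → (1/3:ℝ) ≤ β 1 t := by
    intro t ht
    obtain ⟨n, hn2, hlow⟩ := lower_bound ht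
    have h1 : Real.sqrt (∫ ξ in Set.Ioo (0:ℝ) 1, fn n ξ ^ 2) = 1 := by
      rw [integral_fn_sq_one hn2, Real.sqrt_one]
    have h2 := hβ n hn2 t ht
    rw [h1] at h2
    linarith
  rw [Metric.tendsto_atTop] at hβ0
  obtain ⟨N, hN⟩ := hβ0 (1/3) (by norm_num)
  have h := hN (max N 0) (le_max_left _ _)
  have h2 := hall (max N 0) (le_max_right _ _)
  rw [Real.dist_eq, sub_zero] at h
  have h3 := abs_lt.mp h
  linarith [h3.2]
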